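/- For the CHSH matrix M_{xy} = (1/2)(−1)^{xy} on {0,1}² (with local bound 1), every N-local strategy satisfies |I_1|^{1/N} + |I_2|^{1/N} ≤ 1, where I_1 = ∫ ∏_k (A^k_0(λ_k)+A^k_1(λ_k))/2 · B_1(λ⃗) dq and I_2 = ∫ ∏_k (A^k_0(λ_k)−A^k_1(λ_k))/2 · B_2(λ⃗) dq. -/

import Mathlib

/-!
Since `|a + b| + |a - b| = 2 max(|a|, |b|)`, the source-wise averages `α_k = E|A^k_0 + A^k_1| / 2`
and `β_k = E|A^k_0 - A^k_1| / 2` satisfy `α_k + β_k ≤ 1`. Fubini over the independent sources bounds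
`|I₁| ≤ ∏ α_k` and `|I₂| ≤ ∏ β_k`, and AM-GM gives
`(∏ α_k)^{1/N} + (∏ β_k)^{1/N} ≤ (1/N) ∑ (α_k + β_k) ≤ 1`.
-/

open MeasureTheory

lemma abs_add_div_two_add_abs_sub_div_two_le_one {a b : ℝ} (ha : |a| ≤ 1) (hb : |b| ≤ 1) :
    |(a + b) / 2| + |(a - b) / 2| ≤ 1 := by
  rw [abs_le] at ha hb
  rcases abs_cases ((a + b) / 2) with ⟨h₁, _⟩ | ⟨h₁, _⟩ <;>
    rcases abs_cases ((a - b) / 2) with ⟨h₂, _⟩ | ⟨h₂, _⟩ <;> linarith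

lemma geomMean_add_geomMean_le_one {ι : Type*} [Fintype ι] [Nonempty ι] {a b : ι → ℝ}
    (ha : ∀ i, 0 ≤ a i) (hb : ∀ i, 0 ≤ b i) (hab : ∀ i, a i + b i ≤ 1) :
    (∏ i, a i) ^ (1 / (Fintype.card ι : ℝ)) + (∏ i, b i) ^ (1 / (Fintype.card ι : ℝ)) ≤ 1 := by
  set w : ℝ := 1 / Fintype.card ι
  have hw : 0 ≤ w := by positivity
  have hw_sum : ∑ _i : ι, w = 1 := by
    simp only [w, Finset.sum_const, Finset.card_univ, nsmul_eq_mul]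
    field_simp
  have amgm (z : ι → ℝ) (hz : ∀ i, 0 ≤ z i) : (∏ i, z i) ^ w ≤ ∑ i, w * z i := by
    rw [← Real.finsetProd_rpow _ _ fun i _ => hz i]
    exact Real.geom_mean_le_arith_mean_weighted _ _ _ (fun _ _ => hw) hw_sum fun i _ => hz i
  calc (∏ i, a i) ^ w + (∏ i, b i) ^ w
      ≤ ∑ i, w * a i + ∑ i, w * b i := add_le_add (amgm a ha) (amgm b hb)
    _ = ∑ i, w * (a i + b i) := by rw [← Finset.sum_add_distrib]; simp only [mul_add]
    _ ≤ ∑ _i : ι, w := Finset.sum_le_sum fun i _ => mul_le_of_le_one_right hw (hab i)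
    _ = 1 := hw_sum

lemma abs_integral_prod_mul_le_prod_integral_abs {ι : Type*} [Fintype ι] {Λ : ι → Type*}
    [∀ i, MeasurableSpace (Λ i)] {q : ∀ i, Measure (Λ i)} [∀ i, SigmaFinite (q i)]
    {f : ∀ i, Λ i → ℝ} (hf : ∀ i, Integrable (f i) (q i))
    {b : (∀ i, Λ i) → ℝ} (hbm : AEStronglyMeasurable b (Measure.pi q)) (hb : ∀ x, |b x| ≤ 1) :
    |∫ x, (∏ i, f i (x i)) * b x ∂Measure.pi q| ≤ ∏ i, ∫ y, |f i y| ∂q i := by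
  have hprod : Integrable (fun x => ∏ i, |f i (x i)|) (Measure.pi q) :=
    Integrable.fintype_prod_dep fun i => (hf i).abs
  have hint : Integrable (fun x => (∏ i, f i (x i)) * b x) (Measure.pi q) :=
    (Integrable.fintype_prod_dep hf).mul_bdd hbm (c := 1) (ae_of_all _ hb)
  calc |∫ x, (∏ i, f i (x i)) * b x ∂Measure.pi q|
      ≤ ∫ x, |(∏ i, f i (x i)) * b x| ∂Measure.pi q := abs_integral_le_integral_abs
    _ ≤ ∫ x, ∏ i, |f i (x i)| ∂Measure.pi q := by
        refine integral_mono hint.abs hprod fun x => ?_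
        rw [abs_mul, Finset.abs_prod]
        exact mul_le_of_le_one_right (by positivity) (hb x)
    _ = ∏ i, ∫ y, |f i y| ∂q i := integral_fintype_prod_eq_prod fun i y => |f i y|

lemma integral_add_integral_le_one {α : Type*} [MeasurableSpace α] {μ : Measure α}
    [IsProbabilityMeasure μ] {f g : α → ℝ} (hf : Integrable f μ) (hg : Integrable g μ)
    (hfg : ∀ x, f x + g x ≤ 1) : ∫ x, f x ∂μ + ∫ x, g x ∂μ ≤ 1 := by
  rw [← integral_add hf hg]
  simpa using integral_mono (hf.add hg) (integrable_const 1) hfg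

theorem stmt_11 (N : ℕ) (hN : 1 ≤ N)
    (Λ : Fin N → Type) [∀ k, MeasurableSpace (Λ k)]
    (q : ∀ k, Measure (Λ k)) [∀ k, IsProbabilityMeasure (q k)]
    (A : ∀ k : Fin N, Fin 2 → Λ k → ℝ)
    (B : Fin 2 → (∀ k, Λ k) → ℝ)
    (hAm : ∀ k x, Measurable (A k x))
    (hBm : ∀ i, Measurable (B i))
    (hAb : ∀ k x lam, |A k x lam| ≤ 1)
    (hBb : ∀ i lam, |B i lam| ≤ 1)
    (I₁ I₂ : ℝ)
    (hI₁ : I₁ = ∫ lam, (∏ k : Fin N, (A k 0 (lam k) + A k 1 (lam k)) / 2) *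
        B 0 lam ∂(Measure.pi q))
    (hI₂ : I₂ = ∫ lam, (∏ k : Fin N, (A k 0 (lam k) - A k 1 (lam k)) / 2) *
        B 1 lam ∂(Measure.pi q)) :
    |I₁| ^ (1 / (N : ℝ)) + |I₂| ^ (1 / (N : ℝ)) ≤ 1 := by
  have : Nonempty (Fin N) := ⟨⟨0, hN⟩⟩
  have hA (k : Fin N) (x : Fin 2) : Integrable (A k x) (q k) :=
    .of_bound (hAm k x).aestronglyMeasurable 1 (ae_of_all _ (hAb k x))
  set α : Fin N → ℝ := fun k => ∫ y, |(A k 0 y + A k 1 y) / 2| ∂q k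
  set β : Fin N → ℝ := fun k => ∫ y, |(A k 0 y - A k 1 y) / 2| ∂q k
  have hI₁α : |I₁| ≤ ∏ k, α k := hI₁ ▸ abs_integral_prod_mul_le_prod_integral_abs
    (fun k => ((hA k 0).add (hA k 1)).div_const 2) (hBm 0).aestronglyMeasurable (hBb 0)
  have hI₂β : |I₂| ≤ ∏ k, β k := hI₂ ▸ abs_integral_prod_mul_le_prod_integral_abs
    (fun k => ((hA k 0).sub (hA k 1)).div_const 2) (hBm 1).aestronglyMeasurable (hBb 1)
  have hαβ (k : Fin N) : α k + β k ≤ 1 :=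
    integral_add_integral_le_one (((hA k 0).add (hA k 1)).div_const 2).abs
      (((hA k 0).sub (hA k 1)).div_const 2).abs
      fun y => abs_add_div_two_add_abs_sub_div_two_le_one (hAb k 0 y) (hAb k 1 y)
  have hmean := geomMean_add_geomMean_le_one (fun k => integral_nonneg fun y => abs_nonneg _)
    (fun k => integral_nonneg fun y => abs_nonneg _) hαβ
  rw [Fintype.card_fin] at hmean
  have hN' : 0 ≤ 1 / (N : ℝ) := by positivity
  calc |I₁| ^ (1 / (N : ℝ)) + |I₂| ^ (1 / (N : ℝ))
      ≤ (∏ k, α k) ^ (1 / (N : ℝ)) + (∏ k, β k) ^ (1 / (N : ℝ)) :=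
        add_le_add (Real.rpow_le_rpow (abs_nonneg _) hI₁α hN')
          (Real.rpow_le_rpow (abs_nonneg _) hI₂β hN')
    _ ≤ 1 := hmean
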